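/- arXiv:1010.4487 — 6 statements merged into one kernel-verified Lean document; each statement's English description precedes it below -/
import Mathlib

section
/- Let D ⊆ ℂ be an open set, p ∈ D, and let ρ > 0, c > 0. Suppose h : D → D(0,ρ) is a homeomorphism of D onto the open disk D(0,ρ) with h(p) = 0, satisfying c|h(z)| ≤ |z − p| for all z ∈ D. Then the open round disk D(p, ρc) is contained in D. -/
/-!
Fix `r < ρ`. The map `g` carries the closed disk of radius `r` onto a compact set `K ⊆ D`, and
the distortion bound puts every point of `D` within distance `r c` of `p` into `K`. So inside
the connected ball `D(p, r c)` the set `D` is both open and closed, and it contains `p`; hence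
`D(p, r c) ⊆ D`. Letting `r → ρ` gives the theorem.
-/

open Metric Set

theorem IsPreconnected.subset_of_inter_subset_of_isClosed {X : Type*} [TopologicalSpace X]
    {s D K : Set X} (hs : IsPreconnected s) (hD : IsOpen D) (hK : IsClosed K) (hKD : K ⊆ D)
    (hsD : s ∩ D ⊆ K) (hne : (s ∩ D).Nonempty) : s ⊆ D := by
  intro x hx
  by_contra hxD
  obtain ⟨y, hys, hyD, hyK⟩ :=
    hs D Kᶜ hD hK.isOpen_compl (fun z _ => (em (z ∈ K)).imp (@hKD z) id)
      hne ⟨x, hx, fun hxK => hxD (hKD hxK)⟩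
  exact hyK (hsD ⟨hys, hyD⟩)

theorem ball_subset_of_leftInvOn_of_mul_norm_le {E F : Type*} [NormedAddCommGroup E]
    [NormedSpace ℝ E] [NormedAddCommGroup F] [ProperSpace F] {D : Set E} (hD : IsOpen D)
    {p : E} (hp : p ∈ D)
    {ρ c r : ℝ} (hc : 0 < c) (hr : 0 < r) (hrρ : r < ρ) {h : E → F} {g : F → E}
    (hsurj : SurjOn h D (ball 0 ρ)) (hinv : LeftInvOn g h D) (hg : ContinuousOn g (ball 0 ρ))
    (hcomp : ∀ z ∈ D, c * ‖h z‖ ≤ ‖z - p‖) :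
    ball p (r * c) ⊆ D := by
  have hgD : MapsTo g (ball 0 ρ) D := RightInvOn.mapsTo hinv hsurj
  have hK : IsCompact (g '' closedBall 0 r) :=
    (isCompact_closedBall 0 r).image_of_continuousOn (hg.mono (closedBall_subset_ball hrρ))
  refine (convex_ball p (r * c)).isPreconnected.subset_of_inter_subset_of_isClosed hD
    hK.isClosed ?_ ?_ ⟨p, mem_ball_self (by positivity), hp⟩
  · exact image_subset_iff.2 (hgD.mono_left (closedBall_subset_ball hrρ))
  · rintro z ⟨hzp, hzD⟩
    refine ⟨h z, ?_, hinv hzD⟩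
    have hlt : c * ‖h z‖ < c * r := by
      rw [mem_ball_iff_norm] at hzp
      linarith [hcomp z hzD]
    exact mem_closedBall_zero_iff.2 (lt_of_mul_lt_mul_left hlt hc.le).le

theorem round_disk_subset_coordinate_disk_general
    (D : Set ℂ) (hD : IsOpen D) (p : ℂ) (hp : p ∈ D)
    (ρ c : ℝ) (hc : 0 < c)
    (h g : ℂ → ℂ)
    (hbij : Set.BijOn h D (ball (0 : ℂ) ρ))
    (hinv : Set.InvOn g h D (ball (0 : ℂ) ρ))
    (hgcont : ContinuousOn g (ball (0 : ℂ) ρ))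
    (hcomp : ∀ z ∈ D, c * ‖h z‖ ≤ ‖z - p‖) :
    ball p (ρ * c) ⊆ D := by
  intro z hz
  have hzρ : ‖z - p‖ / c < ρ := (div_lt_iff₀ hc).2 (mem_ball_iff_norm.1 hz)
  obtain ⟨r, hzr, hrρ⟩ := exists_between hzρ
  have hr : 0 < r := (div_nonneg (norm_nonneg _) hc.le).trans_lt hzr
  refine ball_subset_of_leftInvOn_of_mul_norm_le hD hp hc hr hrρ hbij.surjOn hinv.1 hgcont hcomp ?_
  exact mem_ball_iff_norm.2 ((div_lt_iff₀ hc).1 hzr)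

/-- If `h` is a homeomorphism of an open set `D ⊆ ℂ` onto the open disk
`D(0,ρ)` with `h p = 0` and `c * |h z| ≤ |z - p|` on `D`, then the round disk
`D(p, ρ c)` is contained in `D`. -/
theorem round_disk_subset_coordinate_disk
    (D : Set ℂ) (hD : IsOpen D) (p : ℂ) (hp : p ∈ D)
    (ρ c : ℝ) (hρ : 0 < ρ) (hc : 0 < c)
    (h g : ℂ → ℂ)
    (hbij : Set.BijOn h D (ball (0 : ℂ) ρ))
    (hcont : ContinuousOn h D)
    (hinv : Set.InvOn g h D (ball (0 : ℂ) ρ))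
    (hgcont : ContinuousOn g (ball (0 : ℂ) ρ))
    (h0 : h p = 0)
    (hcomp : ∀ z ∈ D, c * ‖h z‖ ≤ ‖z - p‖) :
    ball p (ρ * c) ⊆ D :=
  round_disk_subset_coordinate_disk_general D hD p hp ρ c hc h g hbij hinv hgcont hcomp
end

section
/- Let V and E be sets, with maps assigning to each edge e ∈ E its starting vertex e⁻ ∈ V and ending vertex e⁺ ∈ V, and for v ∈ V let E_v = {e ∈ E : e⁻ = v or e⁺ = v}. Let σ : V → (0,∞) be a weight and for each edge e set σ(e) = (σ(e⁻) + σ(e⁺))/2. Let k ≥ 1 and assume every vertex v satisfies |E_v| ≤ k. Then for every real p with 1 ≤ p < ∞ and every family (α_e)_{e∈E} of complex numbers, one has (as sums in [0,∞]): Σ_{v∈V} σ(v)^p (Σ_{e∈E_v} |α_e|)^p ≤ 2^p k^{p−1} Σ_{e∈E} σ(e)^p |α_e|^p. -/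
/-!
At a vertex `v`, the power-mean inequality gives `(∑_{E_v} |α_e|)^p ≤ k^(p-1) ∑_{E_v} |α_e|^p`.
Summing over `v` and exchanging the order of summation, each edge is counted at its at most two
endpoints, which contribute `σ(e⁻)^p + σ(e⁺)^p ≤ (σ(e⁻) + σ(e⁺))^p = 2^p σ(e)^p`.
-/

open ENNReal

namespace ENNReal

theorem rpow_tsum_le_of_ncard_le {ι : Type*} {s : Set ι} (hs : s.Finite) {k : ℕ}
    (hk : s.ncard ≤ k) (f : ι → ℝ≥0∞) {p : ℝ} (hp : 1 ≤ p) :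
    (∑' i : s, f i) ^ p ≤ (k : ℝ≥0∞) ^ (p - 1) * ∑' i : s, f i ^ p := by
  obtain ⟨t, rfl⟩ := hs.exists_finset_coe
  rw [Set.ncard_coe_finset] at hk
  rw [Finset.tsum_subtype', Finset.tsum_subtype' t (f · ^ p)]
  calc (∑ i ∈ t, f i) ^ p ≤ (t.card : ℝ≥0∞) ^ (p - 1) * ∑ i ∈ t, f i ^ p :=
        rpow_sum_le_const_mul_sum_rpow t f hp
    _ ≤ (k : ℝ≥0∞) ^ (p - 1) * ∑ i ∈ t, f i ^ p := by gcongr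

theorem tsum_tsum_subtype_comm {α β : Type*} (R : α → β → Prop) (f : α → β → ℝ≥0∞) :
    ∑' a, ∑' b : {b // R a b}, f a b = ∑' b, ∑' a : {a // R a b}, f a b := by
  calc ∑' a, ∑' b : {b // R a b}, f a b = ∑' a, ∑' b, {b | R a b}.indicator (f a) b :=
        tsum_congr fun a => tsum_subtype {b | R a b} (f a)
    _ = ∑' b, ∑' a, {a | R a b}.indicator (f · b) a := by
        rw [ENNReal.tsum_comm]; rfl
    _ = ∑' b, ∑' a : {a // R a b}, f a b :=
        tsum_congr fun b => (tsum_subtype {a | R a b} (f · b)).symm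

theorem tsum_subtype_eq_or_eq_le {α : Type*} (f : α → ℝ≥0∞) (a b : α) :
    ∑' x : {x // a = x ∨ b = x}, f x ≤ f a + f b := by
  have hab : {x | a = x ∨ b = x} = {a} ∪ {b} := by ext x; exact or_congr eq_comm eq_comm
  calc ∑' x : {x // a = x ∨ b = x}, f x = ∑' x : ↥({a} ∪ {b} : Set α), f x := by
        rw [← hab]; rfl
    _ ≤ f a + f b := by
        simpa only [tsum_singleton] using ENNReal.tsum_union_le f {a} {b}

theorem ofReal_rpow_add_ofReal_rpow_le {a b p : ℝ} (ha : 0 ≤ a) (hb : 0 ≤ b) (hp : 1 ≤ p) :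
    ENNReal.ofReal a ^ p + ENNReal.ofReal b ^ p ≤ 2 ^ p * ENNReal.ofReal ((a + b) / 2) ^ p := by
  have hsum : ENNReal.ofReal a + ENNReal.ofReal b = 2 * ENNReal.ofReal ((a + b) / 2) := by
    rw [← ofReal_add ha hb, ← ofReal_ofNat 2, ← ofReal_mul zero_le_two]
    ring_nf
  calc ENNReal.ofReal a ^ p + ENNReal.ofReal b ^ p
      ≤ (ENNReal.ofReal a + ENNReal.ofReal b) ^ p := add_rpow_le_rpow_add _ _ hp
    _ = 2 ^ p * ENNReal.ofReal ((a + b) / 2) ^ p := by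
        rw [hsum, mul_rpow_of_nonneg _ _ (by linarith)]

end ENNReal

theorem weighted_lp_vertex_bound_general
    {V E : Type*} (src dst : E → V)
    (σ : V → ℝ) (hσ : ∀ v, 0 < σ v)
    (k : ℕ)
    (hfin : ∀ v : V, {e : E | src e = v ∨ dst e = v}.Finite)
    (hdeg : ∀ v : V, {e : E | src e = v ∨ dst e = v}.ncard ≤ k)
    (p : ℝ) (hp : 1 ≤ p) (α : E → ℂ) :
    ∑' v : V, (ENNReal.ofReal (σ v)) ^ p *
        (∑' e : {e : E // src e = v ∨ dst e = v}, ENNReal.ofReal ‖α e.1‖) ^ p ≤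
      ENNReal.ofReal (2 ^ p * (k : ℝ) ^ (p - 1)) *
        ∑' e : E, (ENNReal.ofReal ((σ (src e) + σ (dst e)) / 2)) ^ p *
          (ENNReal.ofReal ‖α e‖) ^ p := by
  set w : V → ℝ≥0∞ := fun v => ENNReal.ofReal (σ v) ^ p
  set a : E → ℝ≥0∞ := fun e => ENNReal.ofReal ‖α e‖ ^ p
  have hvertex (v : V) :
      w v * (∑' e : {e : E // src e = v ∨ dst e = v}, ENNReal.ofReal ‖α e.1‖) ^ p ≤
        (k : ℝ≥0∞) ^ (p - 1) * ∑' e : {e : E // src e = v ∨ dst e = v}, w v * a e := by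
    calc _ ≤ w v * ((k : ℝ≥0∞) ^ (p - 1) * ∑' e : {e : E // src e = v ∨ dst e = v}, a e) := by
          gcongr
          exact rpow_tsum_le_of_ncard_le (hfin v) (hdeg v) (fun e => ENNReal.ofReal ‖α e‖) hp
      _ = _ := by rw [ENNReal.tsum_mul_left, mul_left_comm]
  have hedge (e : E) : ∑' v : {v : V // src e = v ∨ dst e = v}, w v ≤
      2 ^ p * ENNReal.ofReal ((σ (src e) + σ (dst e)) / 2) ^ p :=
    (tsum_subtype_eq_or_eq_le w _ _).trans
      (ofReal_rpow_add_ofReal_rpow_le (hσ _).le (hσ _).le hp)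
  have hconst : ENNReal.ofReal (2 ^ p * (k : ℝ) ^ (p - 1)) = 2 ^ p * (k : ℝ≥0∞) ^ (p - 1) := by
    rw [ENNReal.ofReal_mul (by positivity), ← ofReal_rpow_of_nonneg zero_le_two (by linarith),
      ← ofReal_rpow_of_nonneg k.cast_nonneg (by linarith), ofReal_ofNat, ofReal_natCast]
  calc _ ≤ ∑' v, (k : ℝ≥0∞) ^ (p - 1) * ∑' e : {e : E // src e = v ∨ dst e = v}, w v * a e :=
        ENNReal.tsum_le_tsum hvertex
    _ = (k : ℝ≥0∞) ^ (p - 1) * ∑' e, (∑' v : {v : V // src e = v ∨ dst e = v}, w v) * a e := by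
        rw [ENNReal.tsum_mul_left,
          tsum_tsum_subtype_comm (fun v e => src e = v ∨ dst e = v) (fun v e => w v * a e)]
        simp only [ENNReal.tsum_mul_right]
    _ ≤ (k : ℝ≥0∞) ^ (p - 1) *
          ∑' e, 2 ^ p * ENNReal.ofReal ((σ (src e) + σ (dst e)) / 2) ^ p * a e := by
        gcongr with e; exact hedge e
    _ = _ := by simp only [hconst, mul_assoc, ENNReal.tsum_mul_left, a]; ring

/-- weighted `ℓ^p` bound for the operator `(α_e) ↦ (Σ_{e ∈ E_v} |α_e|)_v`,
all sums taken in `[0,∞]`. -/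
theorem weighted_lp_vertex_bound
    {V E : Type*} (src dst : E → V)
    (σ : V → ℝ) (hσ : ∀ v, 0 < σ v)
    (k : ℕ) (hk : 1 ≤ k)
    (hfin : ∀ v : V, {e : E | src e = v ∨ dst e = v}.Finite)
    (hdeg : ∀ v : V, {e : E | src e = v ∨ dst e = v}.ncard ≤ k)
    (p : ℝ) (hp : 1 ≤ p) (α : E → ℂ) :
    ∑' v : V, (ENNReal.ofReal (σ v)) ^ p *
        (∑' e : {e : E // src e = v ∨ dst e = v}, ENNReal.ofReal ‖α e.1‖) ^ p ≤
      ENNReal.ofReal (2 ^ p * (k : ℝ) ^ (p - 1)) *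
        ∑' e : E, (ENNReal.ofReal ((σ (src e) + σ (dst e)) / 2)) ^ p *
          (ENNReal.ofReal ‖α e‖) ^ p :=
  weighted_lp_vertex_bound_general src dst σ hσ k hfin hdeg p hp α
end

section
/- Let V and E be sets, with maps assigning to each edge e ∈ E its starting vertex e⁻ ∈ V and ending vertex e⁺ ∈ V. Let σ : V → (0,∞) be a weight and for each edge e set σ(e) = (σ(e⁻) + σ(e⁺))/2. Let k ≥ 1 and assume: (i) every vertex v is an endpoint of at most k edges, where a loop at v is counted twice; (ii) for every edge e, σ(e⁻) ≤ k σ(e⁺) and σ(e⁺) ≤ k σ(e⁻). Then for every real p with 1 ≤ p < ∞ and every family (u_v)_{v∈V} of complex numbers, one has (as sums in [0,∞]): Σ_{e∈E} σ(e)^p (|u_{e⁻}| + |u_{e⁺}|)^p ≤ (k(1+k)^p/2) Σ_{v∈V} σ(v)^p |u_v|^p. -/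
/-!
Edge by edge, comparability of the endpoint weights gives `σ(e) ≤ (1+k)/2 · σ(e^±)`, so the edge
term is at most `(1+k)^p` times the `p`-th power of the mean of `σ(e⁻)|u_{e⁻}|` and
`σ(e⁺)|u_{e⁺}|`, which convexity of `t ↦ t^p` bounds by the mean of the `p`-th powers.
Summing over the edges, each vertex term is counted once per incident edge end, hence at most
`k` times.
-/

open ENNReal

lemma ENNReal.tsum_comp_eq_tsum_encard_mul {V E : Type*} (f : E → V) (g : V → ℝ≥0∞) :
    ∑' e, g (f e) = ∑' v, ({e | f e = v}.encard : ℝ≥0∞) * g v := by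
  rw [← ENNReal.tsum_fiberwise _ f]
  refine tsum_congr fun v => ?_
  rw [← ENNReal.tsum_set_const]
  exact tsum_congr fun e => congrArg g e.2

lemma ENNReal.tsum_add_comp_le_mul_tsum {V E : Type*} (src dst : E → V) (F : V → ℝ≥0∞)
    {k : ℝ≥0∞}
    (hdeg : ∀ v, ({e | src e = v}.encard : ℝ≥0∞) + {e | dst e = v}.encard ≤ k) :
    ∑' e, (F (src e) + F (dst e)) ≤ k * ∑' v, F v := by
  calc ∑' e, (F (src e) + F (dst e))
      = ∑' v, (({e | src e = v}.encard : ℝ≥0∞) + {e | dst e = v}.encard) * F v := by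
        simp only [ENNReal.tsum_add, tsum_comp_eq_tsum_encard_mul, add_mul]
    _ ≤ ∑' v, k * F v := ENNReal.tsum_le_tsum fun v => by gcongr; exact hdeg v
    _ = k * ∑' v, F v := ENNReal.tsum_mul_left

lemma ENNReal.rpow_half_add_mul_add_le {a b c x y : ℝ≥0∞} {p : ℝ} (hp : 1 ≤ p)
    (hab : b ≤ c * a) (hba : a ≤ c * b) :
    ((a + b) / 2 * (x + y)) ^ p ≤ (1 + c) ^ p / 2 * ((a * x) ^ p + (b * y) ^ p) := by
  have hp0 : 0 ≤ p := zero_le_one.trans hp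
  have hlin : (a + b) / 2 * (x + y) ≤ (1 + c) * (2⁻¹ * (a * x) + 2⁻¹ * (b * y)) := by
    calc (a + b) / 2 * (x + y) = 2⁻¹ * ((a + b) * x) + 2⁻¹ * ((a + b) * y) := by
          rw [ENNReal.div_eq_inv_mul]; ring
      _ ≤ 2⁻¹ * ((1 + c) * a * x) + 2⁻¹ * ((1 + c) * b * y) := by
          gcongr
          · rw [add_mul, one_mul]; exact add_le_add le_rfl hab
          · rw [add_mul, one_mul, add_comm a]; exact add_le_add le_rfl hba
      _ = (1 + c) * (2⁻¹ * (a * x) + 2⁻¹ * (b * y)) := by ring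
  calc ((a + b) / 2 * (x + y)) ^ p
      ≤ (1 + c) ^ p * (2⁻¹ * (a * x) + 2⁻¹ * (b * y)) ^ p := by
        rw [← ENNReal.mul_rpow_of_nonneg _ _ hp0]; exact ENNReal.rpow_le_rpow hlin hp0
    _ ≤ (1 + c) ^ p * (2⁻¹ * (a * x) ^ p + 2⁻¹ * (b * y) ^ p) := by
        gcongr
        exact ENNReal.rpow_arith_mean_le_arith_mean2_rpow _ _ _ _ ENNReal.inv_two_add_inv_two hp
    _ = (1 + c) ^ p / 2 * ((a * x) ^ p + (b * y) ^ p) := by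
        rw [ENNReal.div_eq_inv_mul]; ring

theorem weighted_lp_edge_bound_general
    {V E : Type*} (src dst : E → V)
    (σ : V → ℝ)
    (k : ℕ)
    (hfin₁ : ∀ v : V, {e : E | src e = v}.Finite)
    (hfin₂ : ∀ v : V, {e : E | dst e = v}.Finite)
    (hdeg : ∀ v : V, {e : E | src e = v}.ncard + {e : E | dst e = v}.ncard ≤ k)
    (hcomp : ∀ e : E, σ (src e) ≤ k * σ (dst e) ∧ σ (dst e) ≤ k * σ (src e))
    (p : ℝ) (hp : 1 ≤ p) (u : V → ℂ) :
    ∑' e : E, (ENNReal.ofReal ((σ (src e) + σ (dst e)) / 2)) ^ p *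
        (ENNReal.ofReal (‖u (src e)‖ + ‖u (dst e)‖)) ^ p ≤
      ENNReal.ofReal ((k : ℝ) * (1 + k) ^ p / 2) *
        ∑' v : V, (ENNReal.ofReal (σ v)) ^ p * (ENNReal.ofReal ‖u v‖) ^ p := by
  have hp0 : 0 ≤ p := zero_le_one.trans hp
  set F : V → ℝ≥0∞ := fun v => (ENNReal.ofReal (σ v) * ENNReal.ofReal ‖u v‖) ^ p
  have hweight {v w : V} (h : σ v ≤ k * σ w) :
      ENNReal.ofReal (σ v) ≤ k * ENNReal.ofReal (σ w) := by
    rw [← ENNReal.ofReal_natCast, ← ENNReal.ofReal_mul k.cast_nonneg]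
    exact ENNReal.ofReal_le_ofReal h
  have hedge (e : E) :
      (ENNReal.ofReal ((σ (src e) + σ (dst e)) / 2)) ^ p *
        (ENNReal.ofReal (‖u (src e)‖ + ‖u (dst e)‖)) ^ p ≤
      (1 + k) ^ p / 2 * (F (src e) + F (dst e)) := by
    rw [← ENNReal.mul_rpow_of_nonneg _ _ hp0, ENNReal.ofReal_div_of_pos two_pos,
      ENNReal.ofReal_ofNat]
    refine le_trans ?_ (ENNReal.rpow_half_add_mul_add_le hp (hweight (hcomp e).2)
      (hweight (hcomp e).1))
    gcongr <;> exact ENNReal.ofReal_add_le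
  have hdeg_encard (v : V) : ({e | src e = v}.encard : ℝ≥0∞) + {e | dst e = v}.encard ≤ k := by
    rw [← (hfin₁ v).cast_ncard_eq, ← (hfin₂ v).cast_ncard_eq]
    exact_mod_cast hdeg v
  have hconst : ENNReal.ofReal ((k : ℝ) * (1 + k) ^ p / 2) = (1 + k) ^ p / 2 * k := by
    rw [ENNReal.ofReal_div_of_pos two_pos, ENNReal.ofReal_mul k.cast_nonneg,
      ← ENNReal.ofReal_rpow_of_nonneg (by positivity) hp0, ENNReal.ofReal_add zero_le_one
      k.cast_nonneg]
    simp only [ENNReal.ofReal_natCast, ENNReal.ofReal_one, ENNReal.ofReal_ofNat]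
    rw [mul_comm, ENNReal.mul_div_right_comm]
  calc _ ≤ ∑' e, (1 + k) ^ p / 2 * (F (src e) + F (dst e)) := ENNReal.tsum_le_tsum hedge
    _ = (1 + k) ^ p / 2 * ∑' e, (F (src e) + F (dst e)) := ENNReal.tsum_mul_left
    _ ≤ (1 + k) ^ p / 2 * (k * ∑' v, F v) := by
        gcongr; exact ENNReal.tsum_add_comp_le_mul_tsum src dst F hdeg_encard
    _ = _ := by
        simp only [hconst, F, mul_assoc, ENNReal.mul_rpow_of_nonneg _ _ hp0]

/-- weighted `ℓ^p` bound for the operator `(u_v) ↦ (|u_{e⁻}| + |u_{e⁺}|)_e`,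
all sums taken in `[0,∞]`.  A loop at `v` is counted twice in the degree bound. -/
theorem weighted_lp_edge_bound
    {V E : Type*} (src dst : E → V)
    (σ : V → ℝ) (hσ : ∀ v, 0 < σ v)
    (k : ℕ) (hk : 1 ≤ k)
    (hfin₁ : ∀ v : V, {e : E | src e = v}.Finite)
    (hfin₂ : ∀ v : V, {e : E | dst e = v}.Finite)
    (hdeg : ∀ v : V, {e : E | src e = v}.ncard + {e : E | dst e = v}.ncard ≤ k)
    (hcomp : ∀ e : E, σ (src e) ≤ k * σ (dst e) ∧ σ (dst e) ≤ k * σ (src e))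
    (p : ℝ) (hp : 1 ≤ p) (u : V → ℂ) :
    ∑' e : E, (ENNReal.ofReal ((σ (src e) + σ (dst e)) / 2)) ^ p *
        (ENNReal.ofReal (‖u (src e)‖ + ‖u (dst e)‖)) ^ p ≤
      ENNReal.ofReal ((k : ℝ) * (1 + k) ^ p / 2) *
        ∑' v : V, (ENNReal.ofReal (σ v)) ^ p * (ENNReal.ofReal ‖u v‖) ^ p :=
  weighted_lp_edge_bound_general src dst σ k hfin₁ hfin₂ hdeg hcomp p hp u
end

section
/- Let R > 0, C₀ ≥ 0, and let (d_n)_{n∈ℕ} be a sequence of natural numbers bounded by some d₀. For each n let F_n be a complex Banach space and let f_n be a function from ℂ^{d_n} (with the supremum norm) to F_n which is Fréchet ℂ-differentiable on the open polydisk P_n = {x ∈ ℂ^{d_n} : max_i |x_i| < R} and satisfies ‖f_n(x)‖ ≤ C₀ for all x ∈ P_n. Let E be the Banach space of bounded sequences x = (x_n)_n with x_n ∈ ℂ^{d_n}, normed by ‖x‖ = sup_n max_i |(x_n)_i|, and let F be the Banach space of bounded sequences y = (y_n)_n with y_n ∈ F_n, normed by ‖y‖ = sup_n ‖y_n‖.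 Then the map f : x ↦ (f_n(x_n))_{n∈ℕ} sends the open ball {x ∈ E : ‖x‖ < R} into F and is Fréchet ℂ-differentiable at every point x of this ball, with differential df(x)(h) = (df_n(x_n)(h_n))_{n∈ℕ}. -/
/-!
On a complex line through `y` a bounded holomorphic map is a bounded holomorphic function of one
variable, so the Schwarz lemma, applied once to its slope and once more to the slope of the slope,
bounds both `‖Df(y)‖` and the Taylor remainder `f(y + u) - f(y) - Df(y) u` (by `C ‖u‖² / r²`) in
terms of the sup bound `C` and the distance `r` from `y` to the boundary. For `‖x‖ < R` every
component `x n` lies at distance at least `R - ‖x‖` from the boundary of the polydisk, so these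
estimates are uniform in `n`, and componentwise uniform estimates are exactly what Fréchet
differentiability on `ℓ^∞` needs.
-/

open Metric Filter Asymptotics Topology
open scoped ENNReal

section CauchyEstimates

variable {E G : Type*} [NormedAddCommGroup E] [NormedSpace ℂ E]
  [NormedAddCommGroup G] [NormedSpace ℂ G]

lemma norm_dslope_le_of_norm_le {g : ℂ → G} {c z : ℂ} {r C : ℝ}
    (hg : DifferentiableOn ℂ g (ball c r)) (hC : ∀ w ∈ ball c r, ‖g w‖ ≤ C)
    (hz : z ∈ ball c r) : ‖dslope g c z‖ ≤ 2 * C / r := by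
  have hc : ‖g c‖ ≤ C := hC c (mem_ball_self (pos_of_mem_ball hz))
  refine Complex.norm_dslope_le_div_of_mapsTo_ball hg (fun w hw => ?_) hz
  rw [mem_closedBall]
  linarith [dist_le_norm_add_norm (g w) (g c), hC w hw]

lemma norm_dslope_dslope_le_of_norm_le [CompleteSpace G] {g : ℂ → G} {c z : ℂ} {r C : ℝ}
    (hg : DifferentiableOn ℂ g (ball c r)) (hC : ∀ w ∈ ball c r, ‖g w‖ ≤ C)
    (hz : z ∈ ball c r) : ‖dslope (dslope g c) c z‖ ≤ 4 * C / r ^ 2 := by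
  have hslope : DifferentiableOn ℂ (dslope g c) (ball c r) :=
    (Complex.differentiableOn_dslope (ball_mem_nhds c (pos_of_mem_ball hz))).2 hg
  calc ‖dslope (dslope g c) c z‖ ≤ 2 * (2 * C / r) / r :=
        norm_dslope_le_of_norm_le hslope (fun w hw => norm_dslope_le_of_norm_le hg hC hw) hz
    _ = 4 * C / r ^ 2 := by ring

lemma mapsTo_add_smul_ball (y : E) {u : E} (hu : u ≠ 0) (r : ℝ) :
    Set.MapsTo (fun z : ℂ => y + z • u) (ball 0 (r / ‖u‖)) (ball y r) := fun z hz => by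
  rw [mem_ball_zero_iff, lt_div_iff₀ (norm_pos_iff.2 hu)] at hz
  rwa [mem_ball, dist_self_add_left, norm_smul]

variable {f : E → G} {y : E} {r C : ℝ}

lemma differentiableOn_comp_add_smul (hf : DifferentiableOn ℂ f (ball y r)) {u : E}
    (hu : u ≠ 0) : DifferentiableOn ℂ (fun z : ℂ => f (y + z • u)) (ball 0 (r / ‖u‖)) :=
  hf.comp (by fun_prop : Differentiable ℂ fun z : ℂ => y + z • u).differentiableOn
    (mapsTo_add_smul_ball y hu r)

lemma norm_fderiv_le_of_norm_le (hf : DifferentiableOn ℂ f (ball y r))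
    (hC : ∀ w ∈ ball y r, ‖f w‖ ≤ C) (hr : 0 < r) : ‖fderiv ℂ f y‖ ≤ 2 * C / r := by
  have hC_nonneg : 0 ≤ C := (norm_nonneg _).trans (hC y (mem_ball_self hr))
  refine ContinuousLinearMap.opNorm_le_bound _ (by positivity) fun u => ?_
  rcases eq_or_ne u 0 with rfl | hu
  · simp
  have hline : HasDerivAt (fun z : ℂ => f (y + z • u)) (fderiv ℂ f y u) 0 :=
    ((hf.differentiableAt (ball_mem_nhds y hr)).hasFDerivAt.hasLineDerivAt u :)
  have hρ : (0 : ℂ) ∈ ball 0 (r / ‖u‖) := mem_ball_self (by positivity)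
  calc ‖fderiv ℂ f y u‖ = ‖dslope (fun z : ℂ => f (y + z • u)) 0 0‖ := by
        rw [dslope_same, hline.deriv]
    _ ≤ 2 * C / (r / ‖u‖) := norm_dslope_le_of_norm_le (differentiableOn_comp_add_smul hf hu)
        (fun z hz => hC _ (mapsTo_add_smul_ball y hu r hz)) hρ
    _ = 2 * C / r * ‖u‖ := by field_simp

lemma norm_sub_sub_fderiv_le_of_norm_le [CompleteSpace G] (hf : DifferentiableOn ℂ f (ball y r))
    (hC : ∀ w ∈ ball y r, ‖f w‖ ≤ C) {u : E} (hu : ‖u‖ < r) :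
    ‖f (y + u) - f y - fderiv ℂ f y u‖ ≤ 4 * C / r ^ 2 * ‖u‖ ^ 2 := by
  have hr : 0 < r := (norm_nonneg u).trans_lt hu
  rcases eq_or_ne u 0 with rfl | hu₀
  · simp
  set g : ℂ → G := fun z => f (y + z • u)
  have hline : HasDerivAt g (fderiv ℂ f y u) 0 :=
    ((hf.differentiableAt (ball_mem_nhds y hr)).hasFDerivAt.hasLineDerivAt u :)
  have h1 : (1 : ℂ) ∈ ball 0 (r / ‖u‖) := by
    rwa [mem_ball_zero_iff, norm_one, one_lt_div (norm_pos_iff.2 hu₀)]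
  have hremainder : dslope (dslope g 0) 0 1 = f (y + u) - f y - fderiv ℂ f y u := by
    simp only [dslope_of_ne _ one_ne_zero, dslope_same, hline.deriv, slope_def_module, g]
    simp
  calc ‖f (y + u) - f y - fderiv ℂ f y u‖ ≤ 4 * C / (r / ‖u‖) ^ 2 := hremainder ▸
        norm_dslope_dslope_le_of_norm_le (differentiableOn_comp_add_smul hf hu₀)
          (fun z hz => hC _ (mapsTo_add_smul_ball y hu₀ r hz)) h1
    _ = 4 * C / r ^ 2 * ‖u‖ ^ 2 := by field_simp

end CauchyEstimates

namespace lp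

variable {ι 𝕜 : Type*} [NontriviallyNormedField 𝕜] {E F : ι → Type*}
  [∀ i, NormedAddCommGroup (E i)] [∀ i, NormedSpace 𝕜 (E i)]
  [∀ i, NormedAddCommGroup (F i)] [∀ i, NormedSpace 𝕜 (F i)]

open scoped Classical in
/-- Takes the junk value `0` at those `x` whose image sequence is unbounded. -/
noncomputable def piMap (g : ∀ i, E i → F i) (x : lp E ∞) : lp F ∞ :=
  if h : Memℓp (fun i => g i (x i)) ∞ then ⟨_, h⟩ else 0

lemma piMap_apply {g : ∀ i, E i → F i} {x : lp E ∞} (hx : Memℓp (fun i => g i (x i)) ∞)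
    (i : ι) : piMap g x i = g i (x i) := by
  rw [piMap, dif_pos hx]

lemma memℓp_infty_map_of_opNorm_le {D : ∀ i, E i →L[𝕜] F i} {M : ℝ} (hD : ∀ i, ‖D i‖ ≤ M)
    (x : lp E ∞) : Memℓp (fun i => D i (x i)) ∞ :=
  memℓp_infty ⟨M * ‖x‖, by
    rintro _ ⟨i, rfl⟩
    calc ‖D i (x i)‖ ≤ ‖D i‖ * ‖x i‖ := (D i).le_opNorm _
      _ ≤ M * ‖x‖ := mul_le_mul (hD i) (norm_apply_le_norm ENNReal.top_ne_zero x i)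
          (norm_nonneg _) ((norm_nonneg _).trans (hD i))⟩

noncomputable def piMapCLM (D : ∀ i, E i →L[𝕜] F i) {M : ℝ} (hD : ∀ i, ‖D i‖ ≤ M) :
    lp E ∞ →L[𝕜] lp F ∞ :=
  LinearMap.mkContinuous
    { toFun := fun x => ⟨fun i => D i (x i), memℓp_infty_map_of_opNorm_le hD x⟩
      map_add' := fun x y => lp.ext <| funext fun i => map_add (D i) (x i) (y i)
      map_smul' := fun c x => lp.ext <| funext fun i => map_smul (D i) c (x i) }
    (max M 0) fun x => by
      refine norm_le_of_forall_le (by positivity) fun i => ?_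
      calc ‖D i (x i)‖ ≤ ‖D i‖ * ‖x i‖ := (D i).le_opNorm _
        _ ≤ max M 0 * ‖x‖ := mul_le_mul ((hD i).trans (le_max_left _ _))
            (norm_apply_le_norm ENNReal.top_ne_zero x i) (norm_nonneg _) (le_max_right _ _)

@[simp]
lemma piMapCLM_apply {D : ∀ i, E i →L[𝕜] F i} {M : ℝ} (hD : ∀ i, ‖D i‖ ≤ M) (x : lp E ∞)
    (i : ι) : piMapCLM D hD x i = D i (x i) :=
  rfl

theorem hasFDerivAt_piMap {g : ∀ i, E i → F i} {x : lp E ∞}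
    (hg : ∀ᶠ y in 𝓝 x, Memℓp (fun i => g i (y i)) ∞)
    {D : ∀ i, E i →L[𝕜] F i} {M : ℝ} (hD : ∀ i, ‖D i‖ ≤ M) {r K : ℝ} (hr : 0 < r)
    (hrem : ∀ i (u : E i), ‖u‖ < r → ‖g i (x i + u) - g i (x i) - D i u‖ ≤ K * ‖u‖ ^ 2) :
    HasFDerivAt (piMap g) (piMapCLM D hD) x := by
  rw [hasFDerivAt_iff_isLittleO_nhds_zero]
  refine IsBigO.trans_isLittleO ?_ (isLittleO_norm_pow_id one_lt_two)
  refine IsBigO.of_bound (max K 0) ?_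
  have hgx : ∀ᶠ h in 𝓝 0, Memℓp (fun i => g i ((x + h) i)) ∞ :=
    ((continuous_const_add x).tendsto' 0 x (add_zero x)).eventually hg
  filter_upwards [ball_mem_nhds 0 hr, hgx] with h hh hmem
  rw [mem_ball_zero_iff] at hh
  rw [norm_pow, norm_norm]
  refine norm_le_of_forall_le (by positivity) fun i => ?_
  have hhi : ‖h i‖ ≤ ‖h‖ := norm_apply_le_norm ENNReal.top_ne_zero h i
  calc ‖(piMap g (x + h) - piMap g x - piMapCLM D hD h) i‖
      = ‖g i (x i + h i) - g i (x i) - D i (h i)‖ := by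
        rw [coeFn_sub, coeFn_sub, Pi.sub_apply, Pi.sub_apply, piMap_apply hmem,
          piMap_apply hg.self_of_nhds, piMapCLM_apply]
        rfl
    _ ≤ K * ‖h i‖ ^ 2 := hrem i (h i) (hhi.trans_lt hh)
    _ ≤ max K 0 * ‖h‖ ^ 2 := by gcongr; exact le_max_left _ _

end lp

theorem linfty_product_of_bounded_holomorphic_is_differentiable_general
    (R C₀ : ℝ)
    (d : ℕ → ℕ)
    (F : ℕ → Type) [∀ n, NormedAddCommGroup (F n)] [∀ n, NormedSpace ℂ (F n)]
    [∀ n, CompleteSpace (F n)]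
    (f : ∀ n, (Fin (d n) → ℂ) → F n)
    (hdiff : ∀ n, DifferentiableOn ℂ (f n) (ball (0 : Fin (d n) → ℂ) R))
    (hbdd : ∀ n, ∀ x ∈ ball (0 : Fin (d n) → ℂ) R, ‖f n x‖ ≤ C₀) :
    ∃ Φ : lp (fun n => Fin (d n) → ℂ) ∞ → lp F ∞,
      (∀ x : lp (fun n => Fin (d n) → ℂ) ∞, ‖x‖ < R →
        ∀ n : ℕ, (Φ x : ∀ n, F n) n = f n (x n)) ∧
      (∀ x : lp (fun n => Fin (d n) → ℂ) ∞, ‖x‖ < R →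
        ∃ L : lp (fun n => Fin (d n) → ℂ) ∞ →L[ℂ] lp F ∞,
          HasFDerivAt Φ L x ∧
          ∀ h : lp (fun n => Fin (d n) → ℂ) ∞, ∀ n : ℕ,
            (L h : ∀ n, F n) n = fderiv ℂ (f n) (x n) (h n)) := by
  have hmem : ∀ y : lp (fun n => Fin (d n) → ℂ) ∞, ‖y‖ < R → Memℓp (fun n => f n (y n)) ∞ :=
    fun y hy => memℓp_infty ⟨C₀, by
      rintro _ ⟨n, rfl⟩
      exact hbdd n _ <| mem_ball_zero_iff.2 <|
        (lp.norm_apply_le_norm ENNReal.top_ne_zero y n).trans_lt hy⟩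
  refine ⟨lp.piMap f, fun x hx n => lp.piMap_apply (hmem x hx) n, fun x hx => ?_⟩
  set r := R - ‖x‖
  have hr : 0 < r := sub_pos.2 hx
  have hball : ∀ n, ball (x n) r ⊆ ball 0 R := fun n => ball_subset_ball' <| by
    linarith [dist_zero_right (x n), lp.norm_apply_le_norm ENNReal.top_ne_zero x n]
  have hD : ∀ n, ‖fderiv ℂ (f n) (x n)‖ ≤ 2 * C₀ / r := fun n =>
    norm_fderiv_le_of_norm_le ((hdiff n).mono (hball n)) (fun w hw => hbdd n w (hball n hw)) hr
  refine ⟨lp.piMapCLM _ hD,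
    lp.hasFDerivAt_piMap (K := 4 * C₀ / r ^ 2) ?_ hD hr fun n u hu => ?_, fun h n => rfl⟩
  · filter_upwards [(isOpen_lt continuous_norm continuous_const).mem_nhds hx] using hmem
  · exact norm_sub_sub_fderiv_le_of_norm_le ((hdiff n).mono (hball n))
      (fun w hw => hbdd n w (hball n hw)) hu

/-- a uniformly bounded family of holomorphic maps `f_n` on polydisks of
radius `R` (in uniformly bounded dimensions `d n ≤ d₀`) induces, on the `ℓ^∞` products,
a map `x ↦ (f_n (x_n))_n` which sends the open ball of radius `R` into the `ℓ^∞`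
product of the targets and is Fréchet `ℂ`-differentiable there, with differential
`h ↦ (df_n(x_n)(h_n))_n`. -/
theorem linfty_product_of_bounded_holomorphic_is_differentiable
    (R C₀ : ℝ) (hR : 0 < R) (hC₀ : 0 ≤ C₀)
    (d : ℕ → ℕ) (d₀ : ℕ) (hd : ∀ n, d n ≤ d₀)
    (F : ℕ → Type) [∀ n, NormedAddCommGroup (F n)] [∀ n, NormedSpace ℂ (F n)]
    [∀ n, CompleteSpace (F n)]
    (f : ∀ n, (Fin (d n) → ℂ) → F n)
    (hdiff : ∀ n, DifferentiableOn ℂ (f n) (ball (0 : Fin (d n) → ℂ) R))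
    (hbdd : ∀ n, ∀ x ∈ ball (0 : Fin (d n) → ℂ) R, ‖f n x‖ ≤ C₀) :
    ∃ Φ : lp (fun n => Fin (d n) → ℂ) ∞ → lp F ∞,
      (∀ x : lp (fun n => Fin (d n) → ℂ) ∞, ‖x‖ < R →
        ∀ n : ℕ, (Φ x : ∀ n, F n) n = f n (x n)) ∧
      (∀ x : lp (fun n => Fin (d n) → ℂ) ∞, ‖x‖ < R →
        ∃ L : lp (fun n => Fin (d n) → ℂ) ∞ →L[ℂ] lp F ∞,
          HasFDerivAt Φ L x ∧
          ∀ h : lp (fun n => Fin (d n) → ℂ) ∞, ∀ n : ℕ,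
            (L h : ∀ n, F n) n = fderiv ℂ (f n) (x n) (h n)) :=
  linfty_product_of_bounded_holomorphic_is_differentiable_general R C₀ d F f hdiff hbdd
end

section
/- Let Ω ⊆ ℂ be an open set, d ∈ ℕ, R > 0 and M ≥ 0. Let P = {w ∈ ℂ^d : max_i |w_i| < R} and suppose f : Ω × P → ℂ is holomorphic (Fréchet ℂ-differentiable) on the open set Ω × P and satisfies |f(z,w)| ≤ M for all (z,w) ∈ Ω × P. Then for each w ∈ P the function f(·,w) is a bounded holomorphic function on Ω, and the map w ↦ f(·,w), from P to the Banach space of bounded continuous complex-valued functions on Ω equipped with the supremum norm, is Fréchet ℂ-differentiable at every point of P. -/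
/-!
Fix `w₀` with `‖w₀‖ < R` and put `δ = R - ‖w₀‖`. For each `z`, `w ↦ f (z, w)` is holomorphic and
bounded by `M` on `ball w₀ δ`; restricting it to complex lines through `w₀`, Cauchy's estimates
bound its derivative at `w₀` by `2M/δ` and its second-order Taylor remainder by `8M‖v‖²/δ²`,
uniformly in `z`. The uniform remainder bound makes the difference quotients converge uniformly in
`z`, so the derivatives are continuous in `z` and assemble into a bounded operator into the bounded
continuous functions; the same bound is then Fréchet differentiability in the sup norm.
-/

open Metric Filter Topology Asymptotics
open scoped Nat BoundedContinuousFunction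

section Taylor

variable {G : Type*} [NormedAddCommGroup G] [NormedSpace ℂ G] [CompleteSpace G]

theorem norm_sub_sub_smul_deriv_le {g : ℂ → G} {c t : ℂ} {ρ M : ℝ} (hρ : 0 < ρ)
    (hg : DiffContOnCl ℂ g (ball c ρ)) (hM : ∀ z ∈ sphere c ρ, ‖g z‖ ≤ M) (ht : ‖t‖ ≤ ρ / 2) :
    ‖g (c + t) - g c - t • deriv g c‖ ≤ 2 * M * (‖t‖ / ρ) ^ 2 := by
  set r := ‖t‖ / ρ
  have hr₀ : 0 ≤ r := by positivity
  have hr : r ≤ 1 / 2 := by rw [div_le_iff₀ hρ]; linarith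
  have hM₀ : 0 ≤ M := by
    obtain ⟨z, hz⟩ := (NormedSpace.sphere_nonempty (x := c)).mpr hρ.le
    exact (norm_nonneg _).trans (hM z hz)
  have htaylor : HasSum (fun n : ℕ => (n ! : ℂ)⁻¹ • t ^ n • iteratedDeriv n g c) (g (c + t)) := by
    simpa using Complex.hasSum_taylorSeries_on_ball hg.differentiableOn
      (z := c + t) (by simpa using ht.trans_lt (half_lt_self hρ))
  have hterm (n : ℕ) : ‖(n ! : ℂ)⁻¹ • t ^ n • iteratedDeriv n g c‖ ≤ M * r ^ n := by
    have hn : (0 : ℝ) < n ! := mod_cast n.factorial_pos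
    calc ‖(n ! : ℂ)⁻¹ • t ^ n • iteratedDeriv n g c‖
        = (n ! : ℝ)⁻¹ * ‖t‖ ^ n * ‖iteratedDeriv n g c‖ := by
          rw [norm_smul, norm_smul, norm_inv, norm_pow, Complex.norm_natCast, mul_assoc]
      _ ≤ (n ! : ℝ)⁻¹ * ‖t‖ ^ n * (n ! * M / ρ ^ n) := by
          gcongr
          exact Complex.norm_iteratedDeriv_le_of_forall_mem_sphere_norm_le n hρ hg hM
      _ = M * r ^ n := by rw [div_pow]; field_simp
  have htail : HasSum (fun n : ℕ => ((n + 2) ! : ℂ)⁻¹ • t ^ (n + 2) • iteratedDeriv (n + 2) g c)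
      (g (c + t) - g c - t • deriv g c) := by
    simpa [Finset.sum_range_succ, sub_sub] using (hasSum_nat_add_iff' 2).mpr htaylor
  have hgeom : HasSum (fun n : ℕ => M * r ^ 2 * r ^ n) (M * r ^ 2 * (1 - r)⁻¹) :=
    (hasSum_geometric_of_lt_one hr₀ (by linarith)).mul_left (M * r ^ 2)
  calc ‖g (c + t) - g c - t • deriv g c‖ ≤ M * r ^ 2 * (1 - r)⁻¹ :=
        htail.norm_le_of_bounded hgeom fun n => (hterm (n + 2)).trans_eq (by ring)
    _ ≤ M * r ^ 2 * 2 := by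
        gcongr
        rw [inv_le_comm₀ (by linarith) two_pos]
        linarith
    _ = 2 * M * r ^ 2 := by ring

end Taylor

section Line

variable {E G : Type*} [NormedAddCommGroup E] [NormedSpace ℂ E] [NormedAddCommGroup G]
  [NormedSpace ℂ G] {F : E → G} {w₀ v : E} {δ r M : ℝ}

theorem add_smul_mem_ball_of_mul_norm_lt {t : ℂ} (ht : ‖t‖ ≤ r) (hr : r * ‖v‖ < δ) :
    w₀ + t • v ∈ ball w₀ δ := by
  rw [add_mem_ball_iff_norm, norm_smul]
  exact lt_of_le_of_lt (by gcongr) hr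

theorem DifferentiableOn.diffContOnCl_line (hF : DifferentiableOn ℂ F (ball w₀ δ))
    (hr : r * ‖v‖ < δ) : DiffContOnCl ℂ (fun t : ℂ => F (w₀ + t • v)) (ball 0 r) := by
  refine DifferentiableOn.diffContOnCl_ball (U := (fun t : ℂ => w₀ + t • v) ⁻¹' ball w₀ δ)
    (hF.comp (by fun_prop) fun t ht => ht) fun t ht => ?_
  exact add_smul_mem_ball_of_mul_norm_lt (mem_closedBall_zero_iff.mp ht) hr

theorem DifferentiableAt.hasDerivAt_line (hF : DifferentiableAt ℂ F w₀) :
    HasDerivAt (fun t : ℂ => F (w₀ + t • v)) (fderiv ℂ F w₀ v) 0 := by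
  have hline : HasDerivAt (fun t : ℂ => w₀ + t • v) v 0 := by
    simpa using ((hasDerivAt_id (0 : ℂ)).smul_const v).const_add w₀
  exact hF.hasFDerivAt.comp_hasDerivAt_of_eq 0 hline (by simp)

end Line

section Estimates

variable {E G : Type*} [NormedAddCommGroup E] [NormedSpace ℂ E] [NormedAddCommGroup G]
  [NormedSpace ℂ G] {F : E → G} {w₀ : E} {δ M : ℝ}

theorem norm_fderiv_le_of_forall_mem_ball_norm_le (hδ : 0 < δ)
    (hF : DifferentiableOn ℂ F (ball w₀ δ)) (hM : ∀ w ∈ ball w₀ δ, ‖F w‖ ≤ M) :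
    ‖fderiv ℂ F w₀‖ ≤ 2 * M / δ := by
  have hM₀ : 0 ≤ M := (norm_nonneg _).trans (hM w₀ (mem_ball_self hδ))
  refine ContinuousLinearMap.opNorm_le_bound _ (by positivity) fun v => ?_
  rcases eq_or_ne v 0 with rfl | hv₀
  · simp
  have hv : 0 < ‖v‖ := norm_pos_iff.mpr hv₀
  set r := δ / (2 * ‖v‖)
  have hr : r * ‖v‖ < δ := by
    rw [div_mul_eq_mul_div, div_lt_iff₀ (by positivity)]
    nlinarith
  rw [← ((hF.differentiableAt (isOpen_ball.mem_nhds (mem_ball_self hδ))).hasDerivAt_line).deriv]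
  calc ‖deriv (fun t : ℂ => F (w₀ + t • v)) 0‖ ≤ M / r :=
        Complex.norm_deriv_le_of_forall_mem_sphere_norm_le (by positivity)
          (hF.diffContOnCl_line hr) fun t ht =>
            hM _ (add_smul_mem_ball_of_mul_norm_lt (mem_sphere_zero_iff_norm.mp ht).le hr)
    _ = 2 * M / δ * ‖v‖ := by simp only [r]; field_simp

theorem norm_sub_sub_fderiv_apply_le [CompleteSpace G] (hF : DifferentiableOn ℂ F (ball w₀ δ))
    (hM : ∀ w ∈ ball w₀ δ, ‖F w‖ ≤ M) {v : E} (hv : ‖v‖ ≤ δ / 4) :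
    ‖F (w₀ + v) - F w₀ - fderiv ℂ F w₀ v‖ ≤ 8 * M / δ ^ 2 * ‖v‖ ^ 2 := by
  rcases eq_or_ne v 0 with rfl | hv₀
  · simp
  have hv' : 0 < ‖v‖ := norm_pos_iff.mpr hv₀
  have hδ : 0 < δ := by linarith
  set r := δ / (2 * ‖v‖)
  have hr : r * ‖v‖ < δ := by
    rw [div_mul_eq_mul_div, div_lt_iff₀ (by positivity)]
    nlinarith
  have hr₂ : ‖(1 : ℂ)‖ ≤ r / 2 := by
    rw [norm_one, le_div_iff₀ two_pos, le_div_iff₀ (by positivity)]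
    linarith
  have hline := norm_sub_sub_smul_deriv_le (by positivity) (hF.diffContOnCl_line hr)
    (fun t ht => hM _ (add_smul_mem_ball_of_mul_norm_lt (mem_sphere_zero_iff_norm.mp ht).le hr))
    hr₂
  rw [((hF.differentiableAt (isOpen_ball.mem_nhds (mem_ball_self hδ))).hasDerivAt_line).deriv]
    at hline
  calc ‖F (w₀ + v) - F w₀ - fderiv ℂ F w₀ v‖ ≤ 2 * M * (‖(1 : ℂ)‖ / r) ^ 2 := by
        simpa using hline
    _ = 8 * M / δ ^ 2 * ‖v‖ ^ 2 := by simp only [r, norm_one]; field_simp; ring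

end Estimates

theorem hasFDerivAt_of_norm_sub_sub_le_sq {𝕜 E G : Type*} [NontriviallyNormedField 𝕜]
    [NormedAddCommGroup E] [NormedSpace 𝕜 E] [NormedAddCommGroup G] [NormedSpace 𝕜 G]
    {Φ : E → G} {L : E →L[𝕜] G} {w₀ : E} {C : ℝ}
    (h : ∀ᶠ v in 𝓝 0, ‖Φ (w₀ + v) - Φ w₀ - L v‖ ≤ C * ‖v‖ ^ 2) : HasFDerivAt Φ L w₀ := by
  rw [hasFDerivAt_iff_isLittleO_nhds_zero]
  refine IsBigO.trans_isLittleO (IsBigO.of_bound C ?_) (isLittleO_norm_pow_id one_lt_two)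
  simpa using h

namespace BoundedContinuousFunction

variable {X 𝕜 E G : Type*} [TopologicalSpace X] [NontriviallyNormedField 𝕜]
  [NormedAddCommGroup E] [NormedSpace 𝕜 E] [NormedAddCommGroup G] [NormedSpace 𝕜 G]

noncomputable def flipCLM (D : X → E →L[𝕜] G) (hD : ∀ v, Continuous fun x => D x v) {C : ℝ}
    (hC : 0 ≤ C) (hDC : ∀ x, ‖D x‖ ≤ C) : E →L[𝕜] X →ᵇ G :=
  LinearMap.mkContinuous
    { toFun v := ofNormedAddCommGroup (fun x => D x v) (hD v) (C * ‖v‖)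
        fun x => (D x).le_of_opNorm_le (hDC x) v
      map_add' v w := by ext x; simp
      map_smul' c v := by ext x; simp }
    C fun v => norm_ofNormedAddCommGroup_le _ (by positivity) fun x =>
      (D x).le_of_opNorm_le (hDC x) v

@[simp]
theorem flipCLM_apply_apply (D : X → E →L[𝕜] G) (hD : ∀ v, Continuous fun x => D x v) {C : ℝ}
    (hC : 0 ≤ C) (hDC : ∀ x, ‖D x‖ ≤ C) (v : E) (x : X) :
    flipCLM D hD hC hDC v x = D x v :=
  rfl

end BoundedContinuousFunction

section Family

variable {X E G : Type*} [TopologicalSpace X] [NormedAddCommGroup E] [NormedSpace ℂ E]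
  [NormedAddCommGroup G] [NormedSpace ℂ G] [CompleteSpace G] {F : X → E → G} {w₀ : E}
  {δ M : ℝ}

theorem continuous_fderiv_apply_of_forall_norm_le (hδ : 0 < δ)
    (hcont : ∀ w ∈ ball w₀ δ, Continuous fun x => F x w)
    (hF : ∀ x, DifferentiableOn ℂ (F x) (ball w₀ δ)) (hM : ∀ x, ∀ w ∈ ball w₀ δ, ‖F x w‖ ≤ M)
    (v : E) : Continuous fun x => fderiv ℂ (F x) w₀ v := by
  have hnear : ∀ᶠ t : ℂ in 𝓝[≠] 0, ‖t • v‖ ≤ δ / 4 := by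
    have : Tendsto (fun t : ℂ => t • v) (𝓝 0) (𝓝 0) := by
      simpa using (tendsto_id (x := 𝓝 (0 : ℂ))).smul_const v
    exact nhdsWithin_le_nhds <| this.eventually (closedBall_mem_nhds _ (by positivity))
      |>.mono fun t ht => mem_closedBall_zero_iff.mp ht
  have hunif : TendstoUniformly (fun (t : ℂ) x => t⁻¹ • (F x (w₀ + t • v) - F x w₀))
      (fun x => fderiv ℂ (F x) w₀ v) (𝓝[≠] 0) := by
    rw [Metric.tendstoUniformly_iff]
    intro ε hε
    have hsmall : ∀ᶠ t : ℂ in 𝓝[≠] 0, 8 * M / δ ^ 2 * ‖v‖ ^ 2 * ‖t‖ < ε := by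
      have : Tendsto (fun t : ℂ => 8 * M / δ ^ 2 * ‖v‖ ^ 2 * ‖t‖) (𝓝 0) (𝓝 0) := by
        simpa using tendsto_norm_zero.const_mul (8 * M / δ ^ 2 * ‖v‖ ^ 2)
      exact nhdsWithin_le_nhds <| this.eventually (gt_mem_nhds hε)
    filter_upwards [hnear, hsmall, self_mem_nhdsWithin] with t htv hts ht x
    have hquot : t⁻¹ • (F x (w₀ + t • v) - F x w₀) - fderiv ℂ (F x) w₀ v
        = t⁻¹ • (F x (w₀ + t • v) - F x w₀ - fderiv ℂ (F x) w₀ (t • v)) := by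
      rw [map_smul, smul_sub _ _ (t • _), smul_smul, inv_mul_cancel₀ ht, one_smul]
    calc dist (fderiv ℂ (F x) w₀ v) (t⁻¹ • (F x (w₀ + t • v) - F x w₀))
        = ‖t‖⁻¹ * ‖F x (w₀ + t • v) - F x w₀ - fderiv ℂ (F x) w₀ (t • v)‖ := by
          rw [dist_eq_norm', hquot, norm_smul, norm_inv]
      _ ≤ ‖t‖⁻¹ * (8 * M / δ ^ 2 * ‖t • v‖ ^ 2) := by
          gcongr
          exact norm_sub_sub_fderiv_apply_le (hF x) (hM x) htv
      _ = 8 * M / δ ^ 2 * ‖v‖ ^ 2 * ‖t‖ := by rw [norm_smul]; field_simp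
      _ < ε := hts
  refine hunif.continuous (Eventually.frequently ?_)
  filter_upwards [hnear] with t ht
  exact ((hcont _ (add_mem_ball_iff_norm.mpr (by linarith))).sub
    (hcont _ (mem_ball_self hδ))).const_smul _

theorem differentiableAt_of_forall_differentiableOn_of_norm_le {Φ : E → X →ᵇ G} (hM₀ : 0 ≤ M)
    (hδ : 0 < δ) (hΦ : ∀ w ∈ ball w₀ δ, ∀ x, Φ w x = F x w)
    (hF : ∀ x, DifferentiableOn ℂ (F x) (ball w₀ δ)) (hM : ∀ x, ∀ w ∈ ball w₀ δ, ‖F x w‖ ≤ M) :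
    DifferentiableAt ℂ Φ w₀ := by
  have hcont (w) (hw : w ∈ ball w₀ δ) : Continuous fun x => F x w := by
    simpa only [← hΦ w hw] using (Φ w).continuous
  let L := BoundedContinuousFunction.flipCLM (fun x => fderiv ℂ (F x) w₀)
    (continuous_fderiv_apply_of_forall_norm_le hδ hcont hF hM) (by positivity : 0 ≤ 2 * M / δ)
    fun x => norm_fderiv_le_of_forall_mem_ball_norm_le hδ (hF x) (hM x)
  refine (hasFDerivAt_of_norm_sub_sub_le_sq (L := L) (C := 8 * M / δ ^ 2) ?_).differentiableAt
  filter_upwards [closedBall_mem_nhds (0 : E) (by positivity : 0 < δ / 4)] with v hv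
  rw [mem_closedBall_zero_iff] at hv
  refine (BoundedContinuousFunction.norm_le (by positivity)).mpr fun x => ?_
  simp only [BoundedContinuousFunction.coe_sub, Pi.sub_apply,
    hΦ _ (add_mem_ball_iff_norm.mpr (by linarith)), hΦ _ (mem_ball_self hδ), L,
    BoundedContinuousFunction.flipCLM_apply_apply]
  exact norm_sub_sub_fderiv_apply_le (hF x) (hM x) hv

end Family

theorem parameter_dependence_into_bounded_functions_general
    (Ω : Set ℂ) (d : ℕ) (R M : ℝ) (hM : 0 ≤ M)
    (f : ℂ × (Fin d → ℂ) → ℂ)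
    (hf : DifferentiableOn ℂ f (Ω ×ˢ ball (0 : Fin d → ℂ) R))
    (hb : ∀ z ∈ Ω, ∀ w ∈ ball (0 : Fin d → ℂ) R, ‖f (z, w)‖ ≤ M) :
    (∀ w ∈ ball (0 : Fin d → ℂ) R,
        DifferentiableOn ℂ (fun z => f (z, w)) Ω ∧ ∀ z ∈ Ω, ‖f (z, w)‖ ≤ M) ∧
    ∃ Φ : (Fin d → ℂ) → BoundedContinuousFunction Ω ℂ,
      (∀ w ∈ ball (0 : Fin d → ℂ) R, ∀ z : Ω, Φ w z = f (z, w)) ∧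
      ∀ w ∈ ball (0 : Fin d → ℂ) R, DifferentiableAt ℂ Φ w := by
  classical
  have hfiber (w) (hw : w ∈ ball (0 : Fin d → ℂ) R) : DifferentiableOn ℂ (fun z => f (z, w)) Ω :=
    hf.comp (by fun_prop) fun z hz => ⟨hz, hw⟩
  have hslice (z) (hz : z ∈ Ω) : DifferentiableOn ℂ (fun w => f (z, w)) (ball 0 R) :=
    hf.comp (by fun_prop) fun w hw => ⟨hz, hw⟩
  refine ⟨fun w hw => ⟨hfiber w hw, fun z hz => hb z hz w hw⟩, ?_⟩
  let Φ (w : Fin d → ℂ) : Ω →ᵇ ℂ :=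
    if hw : w ∈ ball 0 R then
      .ofNormedAddCommGroup (fun z : Ω => f (z, w)) (hfiber w hw).continuousOn.domRestrict M
        fun z => hb z z.2 w hw
    else 0
  have hΦ (w) (hw : w ∈ ball (0 : Fin d → ℂ) R) (z : Ω) : Φ w z = f (z, w) := by
    simp only [Φ, dif_pos hw]
    rfl
  refine ⟨Φ, hΦ, fun w₀ hw₀ => ?_⟩
  have hsub : ball w₀ (R - ‖w₀‖) ⊆ ball 0 R := ball_subset_ball' (by simp)
  exact differentiableAt_of_forall_differentiableOn_of_norm_le hM
    (sub_pos.mpr (mem_ball_zero_iff.mp hw₀)) (fun w hw => hΦ w (hsub hw))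
    (fun z => (hslice z z.2).mono hsub) fun z w hw => hb z z.2 w (hsub hw)

/-- if `f(z,w)` is holomorphic and bounded by `M` on `Ω × P`, where
`Ω ⊆ ℂ` is open and `P` is the open polydisk of radius `R` in `ℂ^d`, then each
`f(·,w)` is a bounded holomorphic function on `Ω`, and `w ↦ f(·,w)` is Fréchet
`ℂ`-differentiable from `P` into the Banach space of bounded continuous functions
on `Ω` with the sup norm. -/
theorem parameter_dependence_into_bounded_functions
    (Ω : Set ℂ) (hΩ : IsOpen Ω) (d : ℕ) (R M : ℝ) (hR : 0 < R) (hM : 0 ≤ M)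
    (f : ℂ × (Fin d → ℂ) → ℂ)
    (hf : DifferentiableOn ℂ f (Ω ×ˢ ball (0 : Fin d → ℂ) R))
    (hb : ∀ z ∈ Ω, ∀ w ∈ ball (0 : Fin d → ℂ) R, ‖f (z, w)‖ ≤ M) :
    (∀ w ∈ ball (0 : Fin d → ℂ) R,
        DifferentiableOn ℂ (fun z => f (z, w)) Ω ∧ ∀ z ∈ Ω, ‖f (z, w)‖ ≤ M) ∧
    ∃ Φ : (Fin d → ℂ) → BoundedContinuousFunction Ω ℂ,
      (∀ w ∈ ball (0 : Fin d → ℂ) R, ∀ z : Ω, Φ w z = f (z, w)) ∧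
      ∀ w ∈ ball (0 : Fin d → ℂ) R, DifferentiableAt ℂ Φ w :=
  parameter_dependence_into_bounded_functions_general Ω d R M hM f hf hb
end

section
/- Let a ∈ ℂ and 0 ≤ r₁ < s < r₂, and let f be holomorphic on the annulus A = {z ∈ ℂ : r₁ < |z − a| < r₂}. If ∮_{|z−a|=s} (z − a)^n f(z) dz = 0 for every integer n ∈ ℤ, then f is identically zero on A. -/
open Metric Set Filter Topology Complex Real

/-!
By Cauchy's theorem the coefficient integrals vanish on every circle `|z - a| = ρ` inside the
annulus. For `w` off such a circle put `I n = ∮_{|z-a|=ρ} (z - a)ⁿ (z - w)⁻¹ f(z) dz`. Since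
`z - a = (z - w) + (w - a)`, the vanishing coefficients give `I (n + 1) = (w - a) I n`, hence
`I n = (w - a)ⁿ I 0` for all `n ∈ ℤ`, while trivially `‖I n‖ = O(ρⁿ)`. As `ρ ≠ |w - a|`,
letting `n → +∞` or `n → -∞` forces `I 0 = 0`. The Cauchy integral formula on an annulus
expresses `2πi f(w)` as the difference of two such integrals `I 0`, so `f(w) = 0`.
-/

theorem nonpos_of_forall_le_mul_zpow {x K q : ℝ} (hq : 0 < q) (hq₁ : q ≠ 1)
    (h : ∀ n : ℤ, x ≤ K * q ^ n) : x ≤ 0 := by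
  wlog hlt : q < 1 generalizing q
  · refine this (inv_pos.2 hq) (inv_ne_one.2 hq₁) (fun n => ?_) (inv_lt_one_of_one_lt₀ ?_)
    · simpa only [inv_zpow'] using h (-n)
    · exact lt_of_le_of_ne (not_lt.1 hlt) hq₁.symm
  have hlim : Tendsto (fun n : ℕ => K * q ^ n) atTop (𝓝 (K * 0)) :=
    (tendsto_pow_atTop_nhds_zero_of_lt_one hq.le hlt).const_mul K
  simpa using ge_of_tendsto hlim (Eventually.of_forall fun n : ℕ => by simpa using h n)

variable {E : Type*} [NormedAddCommGroup E] [NormedSpace ℂ E]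

theorem circleIntegral_sub_zpow_succ_smul_sub_inv_smul {g : ℂ → E} {c w : ℂ} {r : ℝ} (hr : 0 < r)
    (hw : w ∉ sphere c r) (hg : ContinuousOn g (sphere c r)) (n : ℤ) :
    (∮ z in C(c, r), (z - c) ^ (n + 1) • (z - w)⁻¹ • g z) =
      (∮ z in C(c, r), (z - c) ^ n • g z) +
        (w - c) • ∮ z in C(c, r), (z - c) ^ n • (z - w)⁻¹ • g z := by
  have hzc : ∀ z ∈ sphere c r, z - c ≠ 0 := fun z hz =>
    sub_ne_zero.2 (ne_of_mem_sphere hz hr.ne')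
  have hzw : ∀ z ∈ sphere c r, z - w ≠ 0 := fun z hz =>
    sub_ne_zero.2 (ne_of_mem_of_not_mem hz hw)
  have hpow : ContinuousOn (fun z : ℂ => (z - c) ^ n) (sphere c r) :=
    (continuousOn_id.sub continuousOn_const).zpow₀ n fun z hz => Or.inl (hzc z hz)
  have hinv : ContinuousOn (fun z : ℂ => (z - w)⁻¹) (sphere c r) :=
    (continuousOn_id.sub continuousOn_const).inv₀ hzw
  have hint₁ : CircleIntegrable (fun z => (z - c) ^ n • g z) c r :=
    (hpow.smul hg).circleIntegrable hr.le
  have hint₂ : CircleIntegrable (fun z => (w - c) • (z - c) ^ n • (z - w)⁻¹ • g z) c r :=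
    (continuousOn_const.smul (hpow.smul (hinv.smul hg))).circleIntegrable hr.le
  rw [← circleIntegral.integral_smul, ← circleIntegral.integral_add hint₁ hint₂]
  refine circleIntegral.integral_congr hr.le fun z hz => ?_
  simp only [smul_smul, ← add_smul]
  congr 1
  rw [zpow_add_one₀ (hzc z hz)]
  field_simp [hzw z hz]
  ring

theorem circleIntegral_sub_inv_smul_eq_zero_of_forall_zpow_smul {g : ℂ → E} {c w : ℂ} {r : ℝ}
    (hr : 0 < r) (hw : ‖w - c‖ ≠ r) (hg : ContinuousOn g (sphere c r))
    (hcoeff : ∀ n : ℤ, (∮ z in C(c, r), (z - c) ^ n • g z) = 0) :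
    (∮ z in C(c, r), (z - w)⁻¹ • g z) = 0 := by
  rcases eq_or_ne w c with rfl | hwc
  · simpa using hcoeff (-1)
  have hw' : w ∉ sphere c r := fun h => hw (mem_sphere_iff_norm.1 h)
  set I : ℤ → E := fun n => ∮ z in C(c, r), (z - c) ^ n • (z - w)⁻¹ • g z
  have hstep : ∀ n, I (n + 1) = (w - c) • I n := fun n => by
    simp only [I, circleIntegral_sub_zpow_succ_smul_sub_inv_smul hr hw' hg n, hcoeff n, zero_add]
  have hI : ∀ n, I n = (w - c) ^ n • I 0 := by
    have hwc' : w - c ≠ 0 := sub_ne_zero.2 hwc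
    intro n
    induction n using Int.induction_on with
    | zero => simp
    | succ n ih => rw [hstep, ih, smul_smul, zpow_add_one₀ hwc', mul_comm]
    | pred n ih =>
      have h := hstep (-n - 1)
      rw [sub_add_cancel, ih] at h
      rw [← inv_smul_smul₀ hwc' (I _), ← h, smul_smul, ← zpow_neg_one, ← zpow_add₀ hwc',
        neg_add_eq_sub]
  obtain ⟨M, hM⟩ := (isCompact_sphere c r).exists_bound_of_continuousOn hg
  have hδ : 0 < |r - ‖w - c‖| := abs_pos.2 (sub_ne_zero.2 hw.symm)
  have hIn : ∀ n : ℤ, ‖I n‖ ≤ 2 * π * r * (r ^ n * (|r - ‖w - c‖|⁻¹ * M)) := fun n => by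
    refine circleIntegral.norm_integral_le_of_norm_le_const hr.le fun z hz => ?_
    have hzc : ‖z - c‖ = r := mem_sphere_iff_norm.1 hz
    have hzw : |r - ‖w - c‖| ≤ ‖z - w‖ := by
      simpa only [hzc, sub_sub_sub_cancel_right] using abs_norm_sub_norm_le (z - c) (w - c)
    rw [norm_smul, norm_smul, norm_zpow, norm_inv, hzc]
    gcongr
    exact hM z hz
  have hwc₀ : 0 < ‖w - c‖ := norm_pos_iff.2 (sub_ne_zero.2 hwc)
  suffices ‖I 0‖ ≤ 0 by simpa [I] using this
  refine nonpos_of_forall_le_mul_zpow (K := 2 * π * r * (|r - ‖w - c‖|⁻¹ * M)) (div_pos hr hwc₀)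
    (div_ne_one_of_ne hw.symm) fun n => ?_
  rw [div_zpow, mul_div_assoc', le_div_iff₀ (zpow_pos hwc₀ n)]
  calc ‖I 0‖ * ‖w - c‖ ^ n = ‖I n‖ := by rw [hI n, norm_smul, norm_zpow, mul_comm]
    _ ≤ _ := hIn n
    _ = _ := by ring

theorem circleIntegral_sub_inv_of_notMem_closedBall {c w : ℂ} {r : ℝ} (hr : 0 ≤ r)
    (hw : w ∉ closedBall c r) : (∮ z in C(c, r), (z - w)⁻¹) = 0 :=
  circleIntegral_eq_zero_of_differentiable_on_off_countable hr countable_empty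
    ((continuousOn_id.sub continuousOn_const).inv₀ fun _ hz =>
      sub_ne_zero.2 (ne_of_mem_of_not_mem hz hw))
    fun _ hz => (differentiableAt_id.sub_const w).inv
      (sub_ne_zero.2 (ne_of_mem_of_not_mem (ball_subset_closedBall hz.1) hw))

theorem circleIntegral_sub_inv_smul_sub_of_differentiableOn_annulus [CompleteSpace E]
    {c w : ℂ} {r R : ℝ} {f : ℂ → E} {U : Set ℂ} (hr : 0 < r)
    (hw : w ∈ ball c R \ closedBall c r) (hU : IsOpen U)
    (hAU : closedBall c R \ ball c r ⊆ U) (hf : DifferentiableOn ℂ f U) :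
    (∮ z in C(c, R), (z - w)⁻¹ • f z) - (∮ z in C(c, r), (z - w)⁻¹ • f z) =
      (2 * π * I : ℂ) • f w := by
  have hinterior : ball c R \ closedBall c r ⊆ closedBall c R \ ball c r :=
    sdiff_subset_sdiff ball_subset_closedBall ball_subset_closedBall
  have hc : ContinuousOn f (closedBall c R \ ball c r) := hf.continuousOn.mono hAU
  have hd : ∀ z ∈ ball c R \ closedBall c r, DifferentiableAt ℂ f z := fun z hz =>
    hf.differentiableAt (hU.mem_nhds (hAU (hinterior hz)))
  have hrR : r ≤ R := (lt_of_not_ge (mt mem_closedBall.2 hw.2)).le.trans (mem_ball.1 hw.1).le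
  have hF := circleIntegral_eq_of_differentiable_on_annulus_off_countable hr hrR
    (countable_singleton w)
    ((continuousOn_dslope (mem_of_superset
      ((isOpen_ball.sdiff isClosed_closedBall).mem_nhds hw) hinterior)).2 ⟨hc, hd w hw⟩)
    fun z hz => (differentiableAt_dslope_of_ne hz.2).2 (hd z hz.1)
  have hsph : ∀ ρ, r ≤ ρ → ρ ≤ R → sphere c ρ ⊆ closedBall c R \ ball c r :=
    fun ρ hrρ hρR => closedBall_sdiff_ball (x := c) ▸
      sdiff_subset_sdiff (closedBall_subset_closedBall hρR) (ball_subset_ball hrρ)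
  have hsplit : ∀ ρ, r ≤ ρ → ρ ≤ R → w ∉ sphere c ρ →
      (∮ z in C(c, ρ), dslope f w z) =
        (∮ z in C(c, ρ), (z - w)⁻¹ • f z) - (∮ z in C(c, ρ), (z - w)⁻¹) • f w := by
    intro ρ hrρ hρR hwρ
    have hρ : 0 < ρ := hr.trans_le hrρ
    have hinv : ContinuousOn (fun z : ℂ => (z - w)⁻¹) (sphere c ρ) :=
      (continuousOn_id.sub continuousOn_const).inv₀ fun z hz =>
        sub_ne_zero.2 (ne_of_mem_of_not_mem hz hwρ)
    rw [← circleIntegral.integral_smul_const, ← circleIntegral.integral_sub]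
    · refine circleIntegral.integral_congr hρ.le fun z hz => ?_
      rw [dslope_of_ne _ (ne_of_mem_of_not_mem hz hwρ), slope_def_module, smul_sub]
    · exact (hinv.smul (hc.mono (hsph ρ hrρ hρR))).circleIntegrable hρ.le
    · exact (hinv.smul continuousOn_const).circleIntegrable hρ.le
  rw [hsplit R hrR le_rfl fun h => (mem_ball.1 hw.1).ne (mem_sphere.1 h),
    hsplit r le_rfl hrR fun h => hw.2 (sphere_subset_closedBall h),
    circleIntegral.integral_sub_inv_of_mem_ball hw.1,
    circleIntegral_sub_inv_of_notMem_closedBall hr.le hw.2, zero_smul, sub_zero] at hF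
  rw [← hF, sub_sub_cancel]

def annulus (c : ℂ) (r₁ r₂ : ℝ) : Set ℂ := {z | r₁ < ‖z - c‖ ∧ ‖z - c‖ < r₂}

theorem isOpen_annulus (c : ℂ) (r₁ r₂ : ℝ) : IsOpen (annulus c r₁ r₂) :=
  have hc : Continuous fun z : ℂ => ‖z - c‖ := by fun_prop
  (isOpen_lt continuous_const hc).inter (isOpen_lt hc continuous_const)

theorem closedBall_diff_ball_subset_annulus {c : ℂ} {r₁ r₂ r R : ℝ} (h₁ : r₁ < r) (h₂ : R < r₂) :
    closedBall c R \ ball c r ⊆ annulus c r₁ r₂ := fun _ hz =>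
  ⟨h₁.trans_le (not_lt.1 (mt mem_ball_iff_norm.2 hz.2)),
    (mem_closedBall_iff_norm.1 hz.1).trans_lt h₂⟩

theorem sphere_subset_annulus {c : ℂ} {r₁ r₂ ρ : ℝ} (hρ : ρ ∈ Ioo r₁ r₂) :
    sphere c ρ ⊆ annulus c r₁ r₂ :=
  closedBall_sdiff_ball (x := c) ▸ closedBall_diff_ball_subset_annulus hρ.1 hρ.2

section Annulus

variable {c : ℂ} {r₁ r₂ : ℝ} {f : ℂ → E}

theorem circleIntegral_eq_of_differentiableOn_annulus (hr₁ : 0 ≤ r₁)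
    (hf : DifferentiableOn ℂ f (annulus c r₁ r₂)) {ρ ρ' : ℝ} (hρ : ρ ∈ Ioo r₁ r₂)
    (hρ' : ρ' ∈ Ioo r₁ r₂) : (∮ z in C(c, ρ), f z) = ∮ z in C(c, ρ'), f z := by
  wlog hle : ρ ≤ ρ' generalizing ρ ρ'
  · exact (this hρ' hρ (le_of_not_ge hle)).symm
  have hsub := closedBall_diff_ball_subset_annulus (c := c) hρ.1 hρ'.2
  refine (circleIntegral_eq_of_differentiable_on_annulus_off_countable (hr₁.trans_lt hρ.1) hle
    countable_empty (hf.continuousOn.mono hsub) fun z hz => ?_).symm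
  exact hf.differentiableAt ((isOpen_annulus c r₁ r₂).mem_nhds
    (hsub (sdiff_subset_sdiff ball_subset_closedBall ball_subset_closedBall hz.1)))

theorem circleIntegral_sub_zpow_smul_eq_of_differentiableOn_annulus (hr₁ : 0 ≤ r₁)
    (hf : DifferentiableOn ℂ f (annulus c r₁ r₂)) (n : ℤ) {ρ ρ' : ℝ} (hρ : ρ ∈ Ioo r₁ r₂)
    (hρ' : ρ' ∈ Ioo r₁ r₂) :
    (∮ z in C(c, ρ), (z - c) ^ n • f z) = ∮ z in C(c, ρ'), (z - c) ^ n • f z := by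
  refine circleIntegral_eq_of_differentiableOn_annulus hr₁ (fun z hz => ?_) hρ hρ'
  have hzc : z - c ≠ 0 := norm_pos_iff.1 (hr₁.trans_lt hz.1)
  exact (((differentiableAt_id.sub_const c).zpow (Or.inl hzc)).smul
    (hf.differentiableAt ((isOpen_annulus c r₁ r₂).mem_nhds hz))).differentiableWithinAt

end Annulus

/-- a holomorphic function on an annulus all of whose Laurent
coefficients (computed as contour integrals over an intermediate circle) vanish is
identically zero on the annulus. -/
theorem laurent_coefficients_vanish_imp_zero
    (a : ℂ) (r₁ s r₂ : ℝ) (h₁ : 0 ≤ r₁) (h₂ : r₁ < s) (h₃ : s < r₂)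
    (f : ℂ → ℂ)
    (hf : DifferentiableOn ℂ f {z : ℂ | r₁ < ‖z - a‖ ∧ ‖z - a‖ < r₂})
    (hv : ∀ n : ℤ, (∮ z in C(a, s), (z - a) ^ n * f z) = 0) :
    ∀ z ∈ {z : ℂ | r₁ < ‖z - a‖ ∧ ‖z - a‖ < r₂}, f z = 0 := by
  change DifferentiableOn ℂ f (annulus a r₁ r₂) at hf
  intro w hw
  obtain ⟨ρ₁, hρ₁, hρ₁w⟩ := exists_between hw.1
  obtain ⟨ρ₂, hwρ₂, hρ₂⟩ := exists_between hw.2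
  have hvanish : ∀ ρ ∈ Ioo r₁ r₂, ‖w - a‖ ≠ ρ → (∮ z in C(a, ρ), (z - w)⁻¹ • f z) = 0 :=
    fun ρ hρ hwρ => circleIntegral_sub_inv_smul_eq_zero_of_forall_zpow_smul (h₁.trans_lt hρ.1)
      hwρ (hf.continuousOn.mono (sphere_subset_annulus hρ)) fun n => by
        rw [circleIntegral_sub_zpow_smul_eq_of_differentiableOn_annulus h₁ hf n hρ ⟨h₂, h₃⟩]
        simpa only [smul_eq_mul] using hv n
  have hcauchy := circleIntegral_sub_inv_smul_sub_of_differentiableOn_annulus (h₁.trans_lt hρ₁)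
    ⟨mem_ball_iff_norm.2 hwρ₂, fun h => (mem_closedBall_iff_norm.1 h).not_gt hρ₁w⟩
    (isOpen_annulus a r₁ r₂) (closedBall_diff_ball_subset_annulus hρ₁ hρ₂) hf
  rw [hvanish ρ₂ ⟨hρ₁.trans (hρ₁w.trans hwρ₂), hρ₂⟩ hwρ₂.ne,
    hvanish ρ₁ ⟨hρ₁, (hρ₁w.trans hwρ₂).trans hρ₂⟩ hρ₁w.ne', sub_zero, eq_comm,
    smul_eq_zero] at hcauchy
  exact hcauchy.resolve_left two_pi_I_ne_zero
end
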